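/- Let q : [0,∞) → ℝ be continuous with q(u) ≥ 0 for all u ≥ 0. Then there exists a differentiable function z : [0,∞) → ℝ with z(0) = 0 solving the Riccati equation z'(u) + z(u)² = q(u) for all u ≥ 0, and this solution satisfies z(u) ≥ 0 for all u ≥ 0. -/

import Mathlib

/-!
On a compact interval `[0, T]`, clamp the unknown to `[0, B]` with `B² ≥ max q`. The clamped
field is globally Lipschitz and bounded, so Picard–Lindelöf gives a solution on all of `[0, T]`;
since `q ≥ 0` the field is nonnegative at `z = 0` and nonpositive at `z = B`, so the solution
never leaves `[0, B]` and hence solves the true equation. Lipschitz uniqueness makes these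
solutions agree on overlaps, and they glue to a global one.
-/

open Set Metric Filter Topology
open scoped NNReal

theorem image_le_of_deriv_right_nonpos_of_ge {f f' : ℝ → ℝ} {a b c : ℝ}
    (hf : ContinuousOn f (Icc a b)) (hf' : ∀ x ∈ Ico a b, HasDerivWithinAt f (f' x) (Ici x) x)
    (ha : f a ≤ c) (bound : ∀ x ∈ Ico a b, c ≤ f x → f' x ≤ 0) :
    ∀ ⦃x⦄, x ∈ Icc a b → f x ≤ c := by
  intro x hx
  -- `f` stays below each strict barrier `c + ε (x - a)`; then let `ε → 0`.
  have hε : ∀ ε > 0, f x ≤ c + ε * (x - a) := by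
    intro ε hε
    refine image_le_of_deriv_right_lt_deriv_boundary hf hf' (by simpa using ha)
      (fun y => ((hasDerivAt_id y).sub_const a).const_mul ε |>.const_add c) ?_ hx
    intro y hy hfy
    have : c ≤ f y := hfy ▸ le_add_of_nonneg_right (mul_nonneg hε.le (sub_nonneg.2 hy.1))
    simpa using (bound y hy this).trans_lt hε
  have hlim : Tendsto (fun ε => c + ε * (x - a)) (𝓝[>] 0) (𝓝 c) := by
    have : Continuous fun ε : ℝ => c + ε * (x - a) := by fun_prop
    simpa using (this.tendsto 0).mono_left nhdsWithin_le_nhds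
  exact ge_of_tendsto hlim (eventually_nhdsWithin_of_forall hε)

theorem hasDerivWithinAt_Ici_of_eqOn_Icc {f g : ℝ → ℝ} {f' a b x : ℝ}
    (hfg : EqOn f g (Icc a b)) (hx : x ∈ Ico a b) (hg : HasDerivWithinAt g f' (Icc a b) x) :
    HasDerivWithinAt f f' (Ici a) x := by
  have hmem : Icc a b ∈ 𝓝[Ici a] x :=
    mem_of_superset (inter_mem_nhdsWithin _ (Iio_mem_nhds hx.2)) fun y hy => ⟨hy.1, hy.2.le⟩
  exact (hg.mono_of_mem_nhdsWithin hmem).congr_of_eventuallyEq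
    (eventually_of_mem hmem hfg) (hfg (Ico_subset_Icc_self hx))

theorem lipschitzOnWith_const_sub_sq (c : ℝ) (R : ℝ≥0) :
    LipschitzOnWith (2 * R) (fun x : ℝ => c - x ^ 2) (closedBall 0 R) := by
  refine lipschitzOnWith_iff_dist_le_mul.2 fun x hx y hy => ?_
  rw [mem_closedBall_zero_iff, Real.norm_eq_abs] at hx hy
  calc dist (c - x ^ 2) (c - y ^ 2) = |x + y| * dist x y := by
        rw [dist_sub_left, Real.dist_eq, Real.dist_eq, sq_sub_sq, abs_mul]
    _ ≤ ↑(2 * R) * dist x y := by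
        gcongr
        push_cast
        linarith [abs_add_le x y]

def IsRiccatiSolutionOn (q z : ℝ → ℝ) (s : Set ℝ) : Prop :=
  ∀ t ∈ s, HasDerivWithinAt z (q t - z t ^ 2) s t

namespace IsRiccatiSolutionOn

variable {q z z₁ z₂ : ℝ → ℝ} {s s' : Set ℝ} {a b : ℝ}

theorem mono (hz : IsRiccatiSolutionOn q z s) (h : s' ⊆ s) : IsRiccatiSolutionOn q z s' :=
  fun t ht => (hz t (h ht)).mono h

theorem continuousOn (hz : IsRiccatiSolutionOn q z s) : ContinuousOn z s :=
  fun t ht => (hz t ht).continuousWithinAt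

theorem hasDerivWithinAt_Ici (hz : IsRiccatiSolutionOn q z (Icc a b)) {t : ℝ} (ht : t ∈ Ico a b) :
    HasDerivWithinAt z (q t - z t ^ 2) (Ici t) t :=
  (hz t (Ico_subset_Icc_self ht)).mono_of_mem_nhdsWithin (Icc_mem_nhdsGE_of_mem ht)

theorem eqOn_Icc (h₁ : IsRiccatiSolutionOn q z₁ (Icc a b))
    (h₂ : IsRiccatiSolutionOn q z₂ (Icc a b)) (ha : z₁ a = z₂ a) : EqOn z₁ z₂ (Icc a b) := by
  obtain ⟨C, hC⟩ :=
    isCompact_Icc.exists_bound_of_continuousOn (h₁.continuousOn.prodMk h₂.continuousOn)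
  set R := C.toNNReal
  have hR : ∀ t ∈ Ico a b, z₁ t ∈ closedBall 0 R ∧ z₂ t ∈ closedBall 0 R := fun t ht => by
    have h := (hC t (Ico_subset_Icc_self ht)).trans (Real.le_coe_toNNReal C)
    simp only [mem_closedBall_zero_iff]
    exact ⟨(norm_fst_le _).trans h, (norm_snd_le _).trans h⟩
  exact ODE_solution_unique_of_mem_Icc_right (s := fun _ => closedBall 0 R)
    (fun t _ => lipschitzOnWith_const_sub_sq (q t) R)
    h₁.continuousOn (fun _ => h₁.hasDerivWithinAt_Ici) (fun t ht => (hR t ht).1)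
    h₂.continuousOn (fun _ => h₂.hasDerivWithinAt_Ici) (fun t ht => (hR t ht).2) ha

end IsRiccatiSolutionOn

/-- The Riccati field with the unknown clamped to `[0, B]`; when `0 ≤ q ≤ B²` it points into
`[0, B]` at both ends. -/
noncomputable def truncatedRiccatiField (q : ℝ → ℝ) (B : ℝ≥0) (t x : ℝ) : ℝ :=
  q t - (projIcc (0 : ℝ) B B.coe_nonneg x : ℝ) ^ 2

section truncatedRiccatiField

variable {q : ℝ → ℝ} {B : ℝ≥0}

theorem truncatedRiccatiField_of_mem {t x : ℝ} (hx : x ∈ Icc 0 (B : ℝ)) :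
    truncatedRiccatiField q B t x = q t - x ^ 2 := by
  rw [truncatedRiccatiField, projIcc_of_mem _ hx]

theorem lipschitzWith_truncatedRiccatiField (t : ℝ) :
    LipschitzWith (2 * B) (truncatedRiccatiField q B t) := by
  have hclamp : LipschitzOnWith 1 (fun x : ℝ => (projIcc (0 : ℝ) B B.coe_nonneg x : ℝ)) univ :=
    ((LipschitzWith.id.const_min _).const_max _).lipschitzOnWith
  have := (lipschitzOnWith_const_sub_sq (q t) B).comp hclamp fun x _ => by
    obtain ⟨h0, hB⟩ := (projIcc (0 : ℝ) B B.coe_nonneg x).2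
    rwa [mem_closedBall_zero_iff, Real.norm_of_nonneg h0]
  rw [mul_one] at this
  exact lipschitzOnWith_univ.1 this

theorem abs_truncatedRiccatiField_le {t : ℝ} (hq : q t ∈ Icc 0 ((B : ℝ) ^ 2)) (x : ℝ) :
    |truncatedRiccatiField q B t x| ≤ (B : ℝ) ^ 2 := by
  obtain ⟨h0, hB⟩ := (projIcc (0 : ℝ) B B.coe_nonneg x).2
  have : (projIcc (0 : ℝ) B B.coe_nonneg x : ℝ) ^ 2 ≤ (B : ℝ) ^ 2 := by gcongr
  rw [truncatedRiccatiField, abs_le]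
  constructor <;> nlinarith [hq.1, hq.2]

end truncatedRiccatiField

theorem mem_Icc_of_hasDerivWithinAt_truncatedRiccatiField {q z : ℝ → ℝ} {B : ℝ≥0} {a b : ℝ}
    (hq : ∀ t ∈ Ico a b, q t ∈ Icc 0 ((B : ℝ) ^ 2)) (hz : ContinuousOn z (Icc a b))
    (hz' : ∀ t ∈ Ico a b, HasDerivWithinAt z (truncatedRiccatiField q B t (z t)) (Ici t) t)
    (ha : z a ∈ Icc 0 (B : ℝ)) : ∀ t ∈ Icc a b, z t ∈ Icc 0 (B : ℝ) := by
  intro t ht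
  constructor
  · refine neg_nonpos.1 (image_le_of_deriv_right_nonpos_of_ge (c := 0) hz.neg
      (fun s hs => (hz' s hs).neg) (neg_nonpos.2 ha.1) (fun s hs hzs => ?_) ht)
    rw [truncatedRiccatiField, projIcc_of_le_left _ (neg_nonneg.1 hzs)]
    simpa using (hq s hs).1
  · refine image_le_of_deriv_right_nonpos_of_ge hz hz' ha.2 (fun s hs hzs => ?_) ht
    rw [truncatedRiccatiField, projIcc_of_right_le _ hzs]
    exact sub_nonpos.2 (hq s hs).2

theorem exists_isRiccatiSolutionOn_Icc {q : ℝ → ℝ} {T : ℝ} (hT : 0 ≤ T)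
    (hq : ContinuousOn q (Icc 0 T)) (hq0 : ∀ t ∈ Icc 0 T, 0 ≤ q t) :
    ∃ z, z 0 = 0 ∧ IsRiccatiSolutionOn q z (Icc 0 T) ∧ ∀ t ∈ Icc 0 T, 0 ≤ z t := by
  obtain ⟨B, hqB⟩ : ∃ B : ℝ≥0, ∀ t ∈ Icc 0 T, q t ∈ Icc 0 ((B : ℝ) ^ 2) := by
    obtain ⟨C, hC⟩ := isCompact_Icc.exists_bound_of_continuousOn hq
    refine ⟨NNReal.sqrt C.toNNReal, fun t ht => ⟨hq0 t ht, ?_⟩⟩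
    rw [← NNReal.coe_pow, NNReal.sq_sqrt]
    exact (Real.le_norm_self _).trans ((hC t ht).trans (Real.le_coe_toNNReal C))
  have hPL : IsPicardLindelof (truncatedRiccatiField q B) (⟨0, left_mem_Icc.2 hT⟩ : Icc 0 T) 0
      (B ^ 2 * T.toNNReal) 0 (B ^ 2) (2 * B) :=
    { lipschitzOnWith t _ := (lipschitzWith_truncatedRiccatiField t).lipschitzOnWith
      continuousOn _ _ := hq.sub continuousOn_const
      norm_le t ht x _ := by simpa using abs_truncatedRiccatiField_le (hqB t ht) x
      mul_max_le := by simp [hT] }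
  obtain ⟨z, hz0, hz⟩ := hPL.exists_eq_forall_mem_Icc_hasDerivWithinAt₀
  have hmem := mem_Icc_of_hasDerivWithinAt_truncatedRiccatiField
    (fun t ht => hqB t (Ico_subset_Icc_self ht)) (fun t ht => (hz t ht).continuousWithinAt)
    (fun t ht => (hz t (Ico_subset_Icc_self ht)).mono_of_mem_nhdsWithin (Icc_mem_nhdsGE_of_mem ht))
    (by simp [hz0])
  refine ⟨z, hz0, fun t ht => ?_, fun t ht => (hmem t ht).1⟩
  rw [← truncatedRiccatiField_of_mem (hmem t ht)]
  exact hz t ht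

theorem riccati_global_nonneg_solution (q : ℝ → ℝ)
    (hq : ContinuousOn q (Set.Ici 0))
    (hq0 : ∀ u ∈ Set.Ici (0 : ℝ), 0 ≤ q u) :
    ∃ z : ℝ → ℝ, z 0 = 0 ∧
      (∀ u ∈ Set.Ici (0 : ℝ), HasDerivWithinAt z (q u - z u ^ 2) (Set.Ici 0) u) ∧
      (∀ u ∈ Set.Ici (0 : ℝ), 0 ≤ z u) := by
  choose sol hsol0 hsol hsol_nonneg using fun n : ℕ =>
    exists_isRiccatiSolutionOn_Icc (T := n + 1) (by positivity) (hq.mono Icc_subset_Ici_self)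
      fun t ht => hq0 t ht.1
  have hagree (m n : ℕ) : EqOn (sol m) (sol n) (Icc 0 (min ((m : ℝ) + 1) (n + 1))) :=
    ((hsol m).mono (Icc_subset_Icc_right (min_le_left _ _))).eqOn_Icc
      ((hsol n).mono (Icc_subset_Icc_right (min_le_right _ _))) (by rw [hsol0, hsol0])
  set z := fun u => sol ⌊u⌋₊ u
  have hz (n : ℕ) : EqOn z (sol n) (Icc 0 (n + 1)) := fun t ht =>
    hagree ⌊t⌋₊ n ⟨ht.1, le_min (Nat.lt_floor_add_one t).le ht.2⟩
  refine ⟨z, by simp [z, hsol0], fun u hu => ?_, fun u hu => ?_⟩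
  · have hu' : u ∈ Ico 0 ((⌊u⌋₊ : ℝ) + 1) := ⟨hu, Nat.lt_floor_add_one u⟩
    have := hasDerivWithinAt_Ici_of_eqOn_Icc (hz _) hu' (hsol _ u (Ico_subset_Icc_self hu'))
    rwa [← hz _ (Ico_subset_Icc_self hu')] at this
  · exact hsol_nonneg _ u ⟨hu, (Nat.lt_floor_add_one u).le⟩
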